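/- arXiv:1903.09915 — 2 statements merged into one kernel-verified Lean document; each statement's English description precedes it below -/
import Mathlib

section
/- For the Crank–Nicolson finite difference scheme ε²δₜ²uⱼⁿ + [−(1/2)δₓ² + 1/(2ε²) + (λ/4)((uⱼⁿ⁺¹)² + (uⱼⁿ⁻¹)²)](uⱼⁿ⁺¹ + uⱼⁿ⁻¹) = 0 with periodic boundary conditions uⁿ₀ = uⁿ_N, the discrete energy Eⁿ = ε²‖δₜ⁺uⁿ‖²_{l²} + (1/2)(‖δₓ⁺uⁿ‖²_{l²} + ‖δₓ⁺uⁿ⁺¹‖²_{l²}) + 1/(2ε²)(‖uⁿ‖²_{l²} + ‖uⁿ⁺¹‖²_{l²}) + (hλ/4)Σⱼ((uⱼⁿ)⁴ + (uⱼⁿ⁺¹)⁴) satisfies Eⁿ⁺¹ = Eⁿ for all n ≥ 0. -/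
/-! Multiply the scheme at level `n` by `h (uⱼⁿ⁺¹ − uⱼⁿ⁻¹)` and sum over a period. Each term turns
into the increment of the matching part of the energy: the time difference through
`(c − 2b + a)(c − a) = (c − b)² − (b − a)²`, the mass and quartic terms through
`(c + a)(c − a) = c² − a²` and `(c² + a²)(c² − a²) = c⁴ − a⁴`, and the discrete Laplacian after a
periodic summation by parts. -/

open Finset Function

theorem Finset.sum_range_comp_add_one_of_periodic {M : Type*} [AddCommMonoid M] {N : ℕ}
    {f : ℤ → M} (hf : Periodic f N) :
    ∑ j ∈ range N, f (j + 1) = ∑ j ∈ range N, f j := by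
  cases N with
  | zero => rfl
  | succ m =>
    have hN : f (m + 1 : ℕ) = f 0 := by simpa using hf 0
    rw [sum_range_succ, sum_range_succ' (fun j : ℕ => f j)]
    push_cast at hN ⊢
    rw [hN]

theorem Finset.sum_range_secondDiff_mul_of_periodic {R : Type*} [CommRing R] {N : ℕ}
    {v w : ℤ → R} (hv : Periodic v N) (hw : Periodic w N) :
    ∑ j ∈ range N, (v (j + 1) - 2 * v j + v (j - 1)) * w j
      = -∑ j ∈ range N, (v (j + 1) - v j) * (w (j + 1) - w j) := by
  set g : ℤ → R := fun j => (v j - v (j - 1)) * w j with hg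
  have hg_per : Periodic g N := (hv.sub (hv.sub_const 1)).mul hw
  calc ∑ j ∈ range N, (v (j + 1) - 2 * v j + v (j - 1)) * w j
      = ∑ j ∈ range N, ((v (j + 1) - v j) * w j - g j) :=
        sum_congr rfl fun j _ => by rw [hg]; ring
    _ = ∑ j ∈ range N, (v (j + 1) - v j) * w j - ∑ j ∈ range N, g (j + 1) := by
        rw [sum_sub_distrib, sum_range_comp_add_one_of_periodic hg_per]
    _ = -∑ j ∈ range N, (v (j + 1) - v j) * (w (j + 1) - w j) := by
        rw [← sum_sub_distrib, ← sum_neg_distrib]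
        exact sum_congr rfl fun j _ => by simp only [hg, add_sub_cancel_right]; ring

namespace CNFD

noncomputable section

variable (ε lam τ h : ℝ) (N : ℕ)

/-- The discrete energy `Eⁿ`, evaluated at the two consecutive time levels `a = uⁿ`, `b = uⁿ⁺¹`. -/
def energy (a b : ℤ → ℝ) : ℝ :=
  ε ^ 2 * (h * ∑ j ∈ range N, ((b j - a j) / τ) ^ 2)
    + (1/2) * ((h * ∑ j ∈ range N, ((a (j+1) - a j) / h) ^ 2)
        + (h * ∑ j ∈ range N, ((b (j+1) - b j) / h) ^ 2))
    + (1 / (2 * ε ^ 2)) * ((h * ∑ j ∈ range N, (a j) ^ 2) + (h * ∑ j ∈ range N, (b j) ^ 2))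
    + (h * lam / 4) * ∑ j ∈ range N, ((a j) ^ 4 + (b j) ^ 4)

/-- The left-hand side of the scheme at the time levels `a = uⁿ⁻¹`, `b = uⁿ`, `c = uⁿ⁺¹`. -/
def residual (a b c : ℤ → ℝ) (j : ℤ) : ℝ :=
  ε ^ 2 * ((c j - 2 * b j + a j) / τ ^ 2)
    + (- (1/2) * (((c (j+1) + a (j+1)) - 2 * (c j + a j) + (c (j-1) + a (j-1))) / h ^ 2)
      + (1 / (2 * ε ^ 2)) * (c j + a j)
      + (lam / 4) * ((c j) ^ 2 + (a j) ^ 2) * (c j + a j))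

variable {ε lam τ h N}

theorem energy_sub_energy {a c : ℤ → ℝ} (b : ℤ → ℝ) (hh : h ≠ 0)
    (ha : Periodic a N) (hc : Periodic c N) :
    energy ε lam τ h N b c - energy ε lam τ h N a b
      = h * ∑ j ∈ range N, residual ε lam τ h a b c j * (c j - a j) := by
  have hsbp : ∑ j ∈ range N,
      ((c (j + 1) + a (j + 1) - 2 * (c j + a j) + (c (j - 1) + a (j - 1))) * (c j - a j)
        + (c (j + 1) + a (j + 1) - (c j + a j)) * (c (j + 1) - a (j + 1) - (c j - a j))) = 0 := by
    have hparts := sum_range_secondDiff_mul_of_periodic (hc.add ha) (hc.sub ha)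
    simp only [Pi.add_apply, Pi.sub_apply] at hparts
    rw [sum_add_distrib, hparts, neg_add_cancel]
  rw [← sub_eq_zero]
  unfold energy residual
  simp only [mul_sum, ← sum_add_distrib, ← sum_sub_distrib]
  -- all non-gradient terms cancel pointwise; the gradient terms leave `(2h)⁻¹` times `hsbp`
  rw [← mul_zero (2 * h)⁻¹, ← hsbp, mul_sum]
  refine sum_congr rfl fun j _ => ?_
  field_simp
  ring

end

end CNFD

theorem stmt1_general (ε lam τ h : ℝ) (hh : 0 < h)
    (N : ℕ)
    (u : ℕ → ℤ → ℝ)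
    -- periodic boundary conditions: u is N-periodic in j (in particular u₀ⁿ = u_Nⁿ)
    (hper : ∀ n : ℕ, ∀ j : ℤ, u n (j + N) = u n j)
    -- the CNFD scheme:  ε²δₜ²uⱼⁿ + [−½δₓ² + 1/(2ε²) + (λ/4)((uⱼⁿ⁺¹)²+(uⱼⁿ⁻¹)²)](uⱼⁿ⁺¹+uⱼⁿ⁻¹) = 0
    (hscheme : ∀ n : ℕ, ∀ j : ℤ,
      ε ^ 2 * ((u (n+2) j - 2 * u (n+1) j + u n j) / τ ^ 2)
        + (- (1/2) * (((u (n+2) (j+1) + u n (j+1)) - 2 * (u (n+2) j + u n j)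
              + (u (n+2) (j-1) + u n (j-1))) / h ^ 2)
          + (1 / (2 * ε ^ 2)) * (u (n+2) j + u n j)
          + (lam / 4) * ((u (n+2) j) ^ 2 + (u n j) ^ 2) * (u (n+2) j + u n j)) = 0) :
    -- the discrete energy Eⁿ is conserved: Eⁿ⁺¹ = Eⁿ for all n ≥ 0
    ∀ n : ℕ,
      (ε ^ 2 * (h * ∑ j ∈ Finset.range N, ((u (n+2) j - u (n+1) j) / τ) ^ 2)
        + (1/2) * ((h * ∑ j ∈ Finset.range N, ((u (n+1) (j+1) - u (n+1) j) / h) ^ 2)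
            + (h * ∑ j ∈ Finset.range N, ((u (n+2) (j+1) - u (n+2) j) / h) ^ 2))
        + (1 / (2 * ε ^ 2)) * ((h * ∑ j ∈ Finset.range N, (u (n+1) j) ^ 2)
            + (h * ∑ j ∈ Finset.range N, (u (n+2) j) ^ 2))
        + (h * lam / 4) * ∑ j ∈ Finset.range N, ((u (n+1) j) ^ 4 + (u (n+2) j) ^ 4))
      =
      (ε ^ 2 * (h * ∑ j ∈ Finset.range N, ((u (n+1) j - u n j) / τ) ^ 2)
        + (1/2) * ((h * ∑ j ∈ Finset.range N, ((u n (j+1) - u n j) / h) ^ 2)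
            + (h * ∑ j ∈ Finset.range N, ((u (n+1) (j+1) - u (n+1) j) / h) ^ 2))
        + (1 / (2 * ε ^ 2)) * ((h * ∑ j ∈ Finset.range N, (u n j) ^ 2)
            + (h * ∑ j ∈ Finset.range N, (u (n+1) j) ^ 2))
        + (h * lam / 4) * ∑ j ∈ Finset.range N, ((u n j) ^ 4 + (u (n+1) j) ^ 4)) := by
  intro n
  have hres : ∀ j, CNFD.residual ε lam τ h (u n) (u (n+1)) (u (n+2)) j = 0 := hscheme n
  have hconserved : CNFD.energy ε lam τ h N (u (n+1)) (u (n+2))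
      = CNFD.energy ε lam τ h N (u n) (u (n+1)) := by
    rw [← sub_eq_zero, CNFD.energy_sub_energy _ hh.ne' (hper n) (hper (n+2))]
    simp only [hres, zero_mul, sum_const_zero, mul_zero]
  exact hconserved

/-- Discrete energy conservation for the Crank–Nicolson finite difference (CNFD)
discretization of the nonlinear Klein–Gordon equation, with `N`-periodic real
sequences `u n : ℤ → ℝ`. -/
theorem stmt1 (ε lam τ h : ℝ) (hε : 0 < ε) (hτ : 0 < τ) (hh : 0 < h)
    (N : ℕ) (hN : 0 < N)
    (u : ℕ → ℤ → ℝ)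
    -- periodic boundary conditions: u is N-periodic in j (in particular u₀ⁿ = u_Nⁿ)
    (hper : ∀ n : ℕ, ∀ j : ℤ, u n (j + N) = u n j)
    -- the CNFD scheme:  ε²δₜ²uⱼⁿ + [−½δₓ² + 1/(2ε²) + (λ/4)((uⱼⁿ⁺¹)²+(uⱼⁿ⁻¹)²)](uⱼⁿ⁺¹+uⱼⁿ⁻¹) = 0
    (hscheme : ∀ n : ℕ, ∀ j : ℤ,
      ε ^ 2 * ((u (n+2) j - 2 * u (n+1) j + u n j) / τ ^ 2)
        + (- (1/2) * (((u (n+2) (j+1) + u n (j+1)) - 2 * (u (n+2) j + u n j)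
              + (u (n+2) (j-1) + u n (j-1))) / h ^ 2)
          + (1 / (2 * ε ^ 2)) * (u (n+2) j + u n j)
          + (lam / 4) * ((u (n+2) j) ^ 2 + (u n j) ^ 2) * (u (n+2) j + u n j)) = 0) :
    -- the discrete energy Eⁿ is conserved: Eⁿ⁺¹ = Eⁿ for all n ≥ 0
    ∀ n : ℕ,
      (ε ^ 2 * (h * ∑ j ∈ Finset.range N, ((u (n+2) j - u (n+1) j) / τ) ^ 2)
        + (1/2) * ((h * ∑ j ∈ Finset.range N, ((u (n+1) (j+1) - u (n+1) j) / h) ^ 2)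
            + (h * ∑ j ∈ Finset.range N, ((u (n+2) (j+1) - u (n+2) j) / h) ^ 2))
        + (1 / (2 * ε ^ 2)) * ((h * ∑ j ∈ Finset.range N, (u (n+1) j) ^ 2)
            + (h * ∑ j ∈ Finset.range N, (u (n+2) j) ^ 2))
        + (h * lam / 4) * ∑ j ∈ Finset.range N, ((u (n+1) j) ^ 4 + (u (n+2) j) ^ 4))
      =
      (ε ^ 2 * (h * ∑ j ∈ Finset.range N, ((u (n+1) j - u n j) / τ) ^ 2)
        + (1/2) * ((h * ∑ j ∈ Finset.range N, ((u n (j+1) - u n j) / h) ^ 2)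
            + (h * ∑ j ∈ Finset.range N, ((u (n+1) (j+1) - u (n+1) j) / h) ^ 2))
        + (1 / (2 * ε ^ 2)) * ((h * ∑ j ∈ Finset.range N, (u n j) ^ 2)
            + (h * ∑ j ∈ Finset.range N, (u (n+1) j) ^ 2))
        + (h * lam / 4) * ∑ j ∈ Finset.range N, ((u n j) ^ 4 + (u (n+1) j) ^ 4)) :=
  stmt1_general ε lam τ h hh N u hper hscheme
end

section
/- Let ε > 0 and let z, r : [0,τ] → ℂ be C² functions (spatially homogeneous case, Δ ≡ 0). Define u(s) = e^{is/ε²}z(s) + e^{−is/ε²}z̄(s) + r(s). If z satisfies 2i z' + ε²z'' + 3λ|z|²z = 0 and r satisfies ε²r'' + r/ε² + f_r(z, r; s) = 0, where f_r(z,r;s) = λe^{3is/ε²}z³ + λe^{−3is/ε²}z̄³ + 3λ(e^{2is/ε²}z² + e^{−2is/ε²}z̄²)r + 3λ(e^{is/ε²}z + e^{−is/ε²}z̄)r² + 6λ|z|²r + λr³, then u satisfies the Klein–Gordon ODE ε²u'' + u/ε² + λu³ = 0. -/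
/-
With `e = exp (i s / ε²)` we have `ε² e'' + e / ε² = 0`, so the Klein–Gordon operator
`ε² ∂² + 1/ε²` sends `e z` to `e (2i z' + ε² z'')`, the NLSW operator applied to `z`, and
`e⁻¹ z̄` to its conjugate. Expanding `λ u³` with `e e⁻¹ = 1` gives `f_r` plus the resonant term
`3λ|z|² (e z + e⁻¹ z̄)`, which the NLSW equation for `z` and its conjugate cancel; the equation
for `r` absorbs the rest.
-/

open Complex ComplexConjugate

theorem deriv_deriv_add {𝕜 F : Type*} [NontriviallyNormedField 𝕜] [NormedAddCommGroup F]
    [NormedSpace 𝕜 F] {f g : 𝕜 → F} (hf : ContDiff 𝕜 2 f) (hg : ContDiff 𝕜 2 g) (x : 𝕜) :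
    deriv (deriv (f + g)) x = deriv (deriv f) x + deriv (deriv g) x := by
  simpa only [iteratedDeriv_succ, iteratedDeriv_zero] using
    iteratedDeriv_add (n := 2) (x := x) hf.contDiffAt hg.contDiffAt

theorem hasDerivAt_cexp_mul_ofReal_mul {f : ℝ → ℂ} {f' : ℂ} {t : ℝ} (w : ℂ)
    (hf : HasDerivAt f f' t) :
    HasDerivAt (fun y : ℝ => exp (w * y) * f y) (exp (w * t) * (w * f t + f')) t := by
  have he : HasDerivAt (fun y : ℝ => exp (w * y)) (exp (w * t) * w) t := by
    simpa using ((ofRealCLM.hasDerivAt (x := t)).const_mul w).cexp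
  exact (he.fun_mul hf).congr_deriv (by ring)

theorem deriv_deriv_cexp_mul_ofReal_mul {f : ℝ → ℂ} (hf : ContDiff ℝ 2 f) (w : ℂ) (t : ℝ) :
    deriv (deriv fun y : ℝ => exp (w * y) * f y) t
      = exp (w * t) * (w ^ 2 * f t + 2 * w * deriv f t + deriv (deriv f) t) := by
  have hf₁ : Differentiable ℝ f := hf.differentiable two_ne_zero
  have hf₂ : Differentiable ℝ (deriv f) := by
    simpa only [iteratedDeriv_one] using hf.differentiable_iteratedDeriv' 1
  have hderiv : (deriv fun y : ℝ => exp (w * y) * f y)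
      = fun y : ℝ => exp (w * y) * (w * f y + deriv f y) :=
    funext fun y => (hasDerivAt_cexp_mul_ofReal_mul w (hf₁ y).hasDerivAt).deriv
  rw [hderiv, (hasDerivAt_cexp_mul_ofReal_mul w
    (((hf₁ t).hasDerivAt.const_mul w).fun_add (hf₂ t).hasDerivAt)).deriv]
  ring

theorem contDiff_cexp_mul_ofReal_div_mul {f : ℝ → ℂ} {n : WithTop ℕ∞} (hf : ContDiff ℝ n f)
    (c d : ℂ) : ContDiff ℝ n fun y : ℝ => exp (c * y / d) * f y :=
  (contDiff_exp.comp ((contDiff_const.mul ofRealCLM.contDiff).div_const d)).mul hf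

theorem add_add_pow_three_of_mul_eq_one {R : Type*} [CommRing R] {X Y : R} (h : X * Y = 1)
    (a b r : R) :
    (X * a + Y * b + r) ^ 3 = X ^ 3 * a ^ 3 + Y ^ 3 * b ^ 3 + 3 * (X ^ 2 * a ^ 2 + Y ^ 2 * b ^ 2) * r
      + 3 * (X * a + Y * b) * r ^ 2 + 6 * (a * b) * r + r ^ 3 + 3 * (a * b) * (X * a + Y * b) := by
  linear_combination (3 * a * b * (X * a + Y * b) + 6 * a * b * r) * h

noncomputable def kleinGordonOp (ε : ℝ) (u : ℝ → ℂ) (s : ℝ) : ℂ :=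
  (ε : ℂ) ^ 2 * deriv (deriv u) s + u s / (ε : ℂ) ^ 2

theorem kleinGordonOp_add {ε : ℝ} {u v : ℝ → ℂ} (hu : ContDiff ℝ 2 u) (hv : ContDiff ℝ 2 v)
    (s : ℝ) : kleinGordonOp ε (u + v) s = kleinGordonOp ε u s + kleinGordonOp ε v s := by
  simp only [kleinGordonOp, deriv_deriv_add hu hv, Pi.add_apply]
  ring

theorem kleinGordonOp_cexp_mul {ε : ℝ} (hε : ε ≠ 0) {c : ℂ} (hc : c ^ 2 = -1) {f : ℝ → ℂ}
    (hf : ContDiff ℝ 2 f) (s : ℝ) :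
    kleinGordonOp ε (fun y : ℝ => exp (c * y / ε ^ 2) * f y) s
      = exp (c * s / ε ^ 2) * (2 * c * deriv f s + ε ^ 2 * deriv (deriv f) s) := by
  simp_rw [kleinGordonOp, mul_div_right_comm c, deriv_deriv_cexp_mul_ofReal_mul hf]
  have hε' : (ε : ℂ) ≠ 0 := ofReal_ne_zero.mpr hε
  field_simp
  linear_combination f s * hc

noncomputable def leadingPart (ε : ℝ) (z : ℝ → ℂ) : ℝ → ℂ :=
  (fun s : ℝ => exp (I * s / ε ^ 2) * z s) + fun s : ℝ => exp (-I * s / ε ^ 2) * conj (z s)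

theorem contDiff_leadingPart {ε : ℝ} {z : ℝ → ℂ} (hz : ContDiff ℝ 2 z) :
    ContDiff ℝ 2 (leadingPart ε z) :=
  (contDiff_cexp_mul_ofReal_div_mul hz I _).add
    (contDiff_cexp_mul_ofReal_div_mul (conjCLE.contDiff.comp hz) (-I) _)

theorem kleinGordonOp_leadingPart {ε : ℝ} (hε : ε ≠ 0) {z : ℝ → ℂ} (hz : ContDiff ℝ 2 z)
    (s : ℝ) :
    kleinGordonOp ε (leadingPart ε z) s
      = exp (I * s / ε ^ 2) * (2 * I * deriv z s + ε ^ 2 * deriv (deriv z) s)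
        + exp (-I * s / ε ^ 2) * (-2 * I * conj (deriv z s) + ε ^ 2 * conj (deriv (deriv z) s)) := by
  have hzc : ContDiff ℝ 2 fun y => conj (z y) := conjCLE.contDiff.comp hz
  have hmod := contDiff_cexp_mul_ofReal_div_mul hz I (ε ^ 2)
  have hmod' := contDiff_cexp_mul_ofReal_div_mul hzc (-I) (ε ^ 2)
  rw [leadingPart, kleinGordonOp_add hmod hmod',
    kleinGordonOp_cexp_mul hε I_sq hz, kleinGordonOp_cexp_mul hε (by simp) hzc]
  simp only [starRingEnd_apply, deriv.star']
  ring

theorem stmt12_general (ε lam τ : ℝ) (hε : 0 < ε)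
    (z r : ℝ → ℂ) (hz : ContDiff ℝ 2 z) (hr : ContDiff ℝ 2 r)
    (hzeq : ∀ s ∈ Set.Icc (0:ℝ) τ,
      2 * Complex.I * deriv z s + (ε : ℂ) ^ 2 * deriv (deriv z) s
        + 3 * (lam : ℂ) * (((‖z s‖ : ℝ) : ℂ)) ^ 2 * z s = 0)
    (hreq : ∀ s ∈ Set.Icc (0:ℝ) τ,
      (ε : ℂ) ^ 2 * deriv (deriv r) s + r s / (ε : ℂ) ^ 2
        + ((lam : ℂ) * Complex.exp (3 * Complex.I * (s : ℂ) / (ε : ℂ) ^ 2) * (z s) ^ 3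
          + (lam : ℂ) * Complex.exp (-3 * Complex.I * (s : ℂ) / (ε : ℂ) ^ 2)
              * (starRingEnd ℂ (z s)) ^ 3
          + 3 * (lam : ℂ) * (Complex.exp (2 * Complex.I * (s : ℂ) / (ε : ℂ) ^ 2) * (z s) ^ 2
              + Complex.exp (-2 * Complex.I * (s : ℂ) / (ε : ℂ) ^ 2)
                  * (starRingEnd ℂ (z s)) ^ 2) * r s
          + 3 * (lam : ℂ) * (Complex.exp (Complex.I * (s : ℂ) / (ε : ℂ) ^ 2) * z s
              + Complex.exp (-Complex.I * (s : ℂ) / (ε : ℂ) ^ 2) * starRingEnd ℂ (z s))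
              * (r s) ^ 2
          + 6 * (lam : ℂ) * (((‖z s‖ : ℝ) : ℂ)) ^ 2 * r s
          + (lam : ℂ) * (r s) ^ 3) = 0) :
    let u : ℝ → ℂ := fun s =>
      Complex.exp (Complex.I * (s : ℂ) / (ε : ℂ) ^ 2) * z s
        + Complex.exp (-Complex.I * (s : ℂ) / (ε : ℂ) ^ 2) * starRingEnd ℂ (z s) + r s
    ∀ s ∈ Set.Icc (0:ℝ) τ,
      (ε : ℂ) ^ 2 * deriv (deriv u) s + u s / (ε : ℂ) ^ 2 + (lam : ℂ) * (u s) ^ 3 = 0 := by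
  intro u s hs
  have hzeq_conj := congrArg conj (hzeq s hs)
  simp only [map_add, map_mul, map_pow, map_ofNat, conj_I, conj_ofReal, map_zero] at hzeq_conj
  have hphase : exp (I * s / ε ^ 2) * exp (-I * s / ε ^ 2) = 1 := by
    rw [← exp_add, ← exp_zero]; ring_nf
  have hcube := add_add_pow_three_of_mul_eq_one hphase (z s) (conj (z s)) (r s)
  rw [mul_conj'] at hcube
  have h3 : exp (3 * I * s / ε ^ 2) = exp (I * s / ε ^ 2) ^ 3 := by rw [← exp_nat_mul]; ring_nf
  have h3' : exp (-3 * I * s / ε ^ 2) = exp (-I * s / ε ^ 2) ^ 3 := by rw [← exp_nat_mul]; ring_nf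
  have h2 : exp (2 * I * s / ε ^ 2) = exp (I * s / ε ^ 2) ^ 2 := by rw [← exp_nat_mul]; ring_nf
  have h2' : exp (-2 * I * s / ε ^ 2) = exp (-I * s / ε ^ 2) ^ 2 := by rw [← exp_nat_mul]; ring_nf
  have hreq_s := hreq s hs
  rw [h3, h3', h2, h2'] at hreq_s
  change kleinGordonOp ε (leadingPart ε z + r) s + lam * (leadingPart ε z s + r s) ^ 3 = 0
  rw [kleinGordonOp_add (contDiff_leadingPart hz) hr, kleinGordonOp_leadingPart hε.ne' hz,
    kleinGordonOp, leadingPart, Pi.add_apply]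
  linear_combination exp (I * s / ε ^ 2) * hzeq s hs + exp (-I * s / ε ^ 2) * hzeq_conj
    + hreq_s + lam * hcube

/-- Exactness of the multiscale decomposition by frequency (spatially homogeneous case):
if `z` solves `2iz' + ε²z'' + 3λ|z|²z = 0` and `r` solves `ε²r'' + r/ε² + f_r(z,r;s) = 0`,
then `u(s) = e^{is/ε²}z(s) + e^{−is/ε²}z̄(s) + r(s)` solves `ε²u'' + u/ε² + λu³ = 0`. -/
theorem stmt12 (ε lam τ : ℝ) (hε : 0 < ε) (hτ : 0 < τ)
    (z r : ℝ → ℂ) (hz : ContDiff ℝ 2 z) (hr : ContDiff ℝ 2 r)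
    (hzeq : ∀ s ∈ Set.Icc (0:ℝ) τ,
      2 * Complex.I * deriv z s + (ε : ℂ) ^ 2 * deriv (deriv z) s
        + 3 * (lam : ℂ) * (((‖z s‖ : ℝ) : ℂ)) ^ 2 * z s = 0)
    (hreq : ∀ s ∈ Set.Icc (0:ℝ) τ,
      (ε : ℂ) ^ 2 * deriv (deriv r) s + r s / (ε : ℂ) ^ 2
        + ((lam : ℂ) * Complex.exp (3 * Complex.I * (s : ℂ) / (ε : ℂ) ^ 2) * (z s) ^ 3
          + (lam : ℂ) * Complex.exp (-3 * Complex.I * (s : ℂ) / (ε : ℂ) ^ 2)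
              * (starRingEnd ℂ (z s)) ^ 3
          + 3 * (lam : ℂ) * (Complex.exp (2 * Complex.I * (s : ℂ) / (ε : ℂ) ^ 2) * (z s) ^ 2
              + Complex.exp (-2 * Complex.I * (s : ℂ) / (ε : ℂ) ^ 2)
                  * (starRingEnd ℂ (z s)) ^ 2) * r s
          + 3 * (lam : ℂ) * (Complex.exp (Complex.I * (s : ℂ) / (ε : ℂ) ^ 2) * z s
              + Complex.exp (-Complex.I * (s : ℂ) / (ε : ℂ) ^ 2) * starRingEnd ℂ (z s))
              * (r s) ^ 2
          + 6 * (lam : ℂ) * (((‖z s‖ : ℝ) : ℂ)) ^ 2 * r s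
          + (lam : ℂ) * (r s) ^ 3) = 0) :
    let u : ℝ → ℂ := fun s =>
      Complex.exp (Complex.I * (s : ℂ) / (ε : ℂ) ^ 2) * z s
        + Complex.exp (-Complex.I * (s : ℂ) / (ε : ℂ) ^ 2) * starRingEnd ℂ (z s) + r s
    ∀ s ∈ Set.Icc (0:ℝ) τ,
      (ε : ℂ) ^ 2 * deriv (deriv u) s + u s / (ε : ℂ) ^ 2 + (lam : ℂ) * (u s) ^ 3 = 0 :=
  stmt12_general ε lam τ hε z r hz hr hzeq hreq
end
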